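/- arXiv:1512.01609 — 2 statements merged into one kernel-verified Lean document; each statement's English description precedes it below -/
import Mathlib

section
/- Consider two coupled queue systems with identical arrivals λ(t), rejections d(t), and server activity indicators H_n(t), n = 1..N. Virtual queues satisfy Q_n(t+1) = max{Q_n(t) + R_n(t) − μ_n(t)H_n(t), 0} with ∑_n R_n(t) = λ(t) − d(t), and the actual single queue satisfies Q(t+1) = max{Q(t) + λ(t) − d(t) − ∑_n μ_n(t)H_n(t), 0}. If Q(0) = ∑_n Q_n(0) = 0, then Q(t) ≤ ∑_{n=1}^N Q_n(t) for all t. -/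
theorem stmt_8 (N : ℕ) (Q : ℕ → ℝ) (Qn R μ H : Fin N → ℕ → ℝ)
    (lam d : ℕ → ℝ)
    (hlam : ∀ t, 0 ≤ lam t) (hd : ∀ t, 0 ≤ d t)
    (hRnn : ∀ n t, 0 ≤ R n t) (hμnn : ∀ n t, 0 ≤ μ n t)
    (hH : ∀ n t, H n t = 0 ∨ H n t = 1)
    (hRsum : ∀ t, ∑ n, R n t = lam t - d t)
    (hQn : ∀ n t, Qn n (t + 1) = max (Qn n t + R n t - μ n t * H n t) 0)
    (hQ : ∀ t, Q (t + 1) = max (Q t + lam t - d t - ∑ n, μ n t * H n t) 0)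
    (hQ0 : Q 0 = 0) (hQn0 : ∀ n, Qn n 0 = 0) :
    ∀ t, Q t ≤ ∑ n, Qn n t := by
  intro t
  induction t with
  | zero =>
    simp [hQ0, hQn0]
  | succ t ih =>
    rw [hQ t]
    have h1 : ∑ n, Qn n (t + 1) = ∑ n, max (Qn n t + R n t - μ n t * H n t) 0 := by
      simp [hQn]
    rw [h1]
    apply max_le
    · calc Q t + lam t - d t - ∑ n, μ n t * H n t
          ≤ ∑ n, (Qn n t + R n t - μ n t * H n t) := by
            rw [Finset.sum_sub_distrib, Finset.sum_add_distrib, hRsum]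
            linarith
        _ ≤ ∑ n, max (Qn n t + R n t - μ n t * H n t) 0 :=
            Finset.sum_le_sum fun n _ => le_max_left _ _
    · exact Finset.sum_nonneg fun n _ => le_max_right _ _
end

section
/- Under the hypotheses of the virtualization lemma (Q(0)=0, Q_n(0)=0 for all n, identical arrivals/rejections/activity, and each virtual queue satisfying Q_n(t) ≤ V·c_max + R_max for all t), the actual queue satisfies Q(t) ≤ N·(V·c_max + R_max) for all t. -/
theorem stmt_9 (N : ℕ) (Q : ℕ → ℝ) (Qn R μ H : Fin N → ℕ → ℝ)
    (lam d : ℕ → ℝ) (V cmax Rmax : ℝ)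
    (hV : 0 < V) (hcmax : 0 < cmax) (hRmax : 0 < Rmax)
    (hlam : ∀ t, 0 ≤ lam t) (hd : ∀ t, 0 ≤ d t)
    (hRnn : ∀ n t, 0 ≤ R n t) (hμnn : ∀ n t, 0 ≤ μ n t)
    (hH : ∀ n t, H n t = 0 ∨ H n t = 1)
    (hRsum : ∀ t, ∑ n, R n t = lam t - d t)
    (hQn : ∀ n t, Qn n (t + 1) = max (Qn n t + R n t - μ n t * H n t) 0)
    (hQ : ∀ t, Q (t + 1) = max (Q t + lam t - d t - ∑ n, μ n t * H n t) 0)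
    (hQ0 : Q 0 = 0) (hQn0 : ∀ n, Qn n 0 = 0)
    (hbound : ∀ n t, Qn n t ≤ V * cmax + Rmax) :
    ∀ t, Q t ≤ N * (V * cmax + Rmax) := by
  have key : ∀ t, Q t ≤ ∑ n, Qn n t := by
    intro t
    induction t with
    | zero => simp [hQ0, hQn0]
    | succ t ih =>
      rw [hQ t]
      have h1 : Q t + lam t - d t - ∑ n, μ n t * H n t ≤
          ∑ n, (Qn n t + R n t - μ n t * H n t) := by
        rw [Finset.sum_sub_distrib, Finset.sum_add_distrib, hRsum t]
        linarith
      calc max (Q t + lam t - d t - ∑ n, μ n t * H n t) 0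
          ≤ ∑ n, max (Qn n t + R n t - μ n t * H n t) 0 := by
            apply max_le
            · exact h1.trans (Finset.sum_le_sum fun n _ => le_max_left _ _)
            · exact Finset.sum_nonneg fun n _ => le_max_right _ _
        _ = ∑ n, Qn n (t + 1) := by simp [hQn]
  intro t
  calc Q t ≤ ∑ n, Qn n t := key t
    _ ≤ ∑ _n : Fin N, (V * cmax + Rmax) := Finset.sum_le_sum fun n _ => hbound n t
    _ = N * (V * cmax + Rmax) := by simp; ring
end
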